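/- The determinant of the Hessian of $f(a,b) := 4 + \frac{1}{2}\big(ab - 2a - 2b - \sqrt{ab(4-a)(4-b)}\big)$ at any point $(a,b)$ with $a, b > 0$ and $a + b < 4$ equals $\frac{16 - \big(\frac{1}{2}(\sqrt{(4-a)(4-b)} - \sqrt{ab})^2 - 4\big)^2}{4ab(4-a)(4-b)}$, which is strictly positive. -/

import Mathlib

/-! Write `s x = √(x (4 - x))`. For `0 ≤ a ≤ 4` the square root in `f` splits as `s a * s b`, so
`f a b = 4 + (a b - 2 a - 2 b - s a * s b) / 2`. Since `s' = (2 - x) / s` and `s'' = -4 / s ^ 3`,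
`f_aa = 2 s(b) / s(a)³`, `f_bb = 2 s(a) / s(b)³` and `f_ab = (1 - s'(a) s'(b)) / 2`, and with
`s(a)² s(b)² = a b (4 - a) (4 - b)` the Hessian determinant is
`(16 - ((2 - a)(2 - b) - s a * s b)²) / (4 a b (4 - a) (4 - b))`.
Finally `(2 - a)(2 - b) - s a * s b = (√((4 - a)(4 - b)) - √(a b))² / 2 - 4`, and
`0 < √((4 - a)(4 - b)) - √(a b) < 4` when `a, b > 0`, `a + b < 4`, which gives positivity. -/

open Set Topology

noncomputable def f (a b : ℝ) : ℝ :=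
  4 + 1 / 2 * (a * b - 2 * a - 2 * b - Real.sqrt (a * b * (4 - a) * (4 - b)))

noncomputable def semicircle (x : ℝ) : ℝ := √(x * (4 - x))

lemma semicircle_pos {x : ℝ} (h0 : 0 < x) (h4 : x < 4) : 0 < semicircle x :=
  Real.sqrt_pos.2 (by nlinarith)

lemma semicircle_sq {x : ℝ} (h0 : 0 ≤ x) (h4 : x ≤ 4) : semicircle x ^ 2 = x * (4 - x) :=
  Real.sq_sqrt (by nlinarith)

lemma sqrt_mul_four_sub_mul_four_sub {x : ℝ} (h0 : 0 ≤ x) (h4 : x ≤ 4) (y : ℝ) :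
    √(x * y * (4 - x) * (4 - y)) = semicircle x * semicircle y := by
  rw [semicircle, semicircle, ← Real.sqrt_mul (by nlinarith)]
  ring_nf

lemma hasDerivAt_semicircle {x : ℝ} (h0 : 0 < x) (h4 : x < 4) :
    HasDerivAt semicircle ((2 - x) / semicircle x) x := by
  refine (((hasDerivAt_id' x).mul ((hasDerivAt_id' x).const_sub 4)).sqrt
    (mul_pos h0 (by linarith)).ne').congr_deriv ?_
  have := (semicircle_pos h0 h4).ne'
  rw [semicircle] at this ⊢
  simp only [Pi.mul_apply]
  field_simp
  ring

lemma hasDerivAt_semicircle_slope {x : ℝ} (h0 : 0 < x) (h4 : x < 4) :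
    HasDerivAt (fun y => (2 - y) / semicircle y) (-4 / semicircle x ^ 3) x := by
  refine (((hasDerivAt_id' x).const_sub 2).div (hasDerivAt_semicircle h0 h4)
    (semicircle_pos h0 h4).ne').congr_deriv ?_
  have := (semicircle_pos h0 h4).ne'
  field_simp
  linear_combination -semicircle_sq h0.le h4.le

lemma f_comm (x y : ℝ) : f x y = f y x := by
  rw [f, f, show y * x * (4 - y) * (4 - x) = x * y * (4 - x) * (4 - y) by ring]
  ring

lemma hasDerivAt_f_left {x : ℝ} (h0 : 0 < x) (h4 : x < 4) (y : ℝ) :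
    HasDerivAt (fun x' => f x' y)
      (1 / 2 * (y - 2 - (2 - x) / semicircle x * semicircle y)) x := by
  have heq : (fun x' => f x' y) =ᶠ[𝓝 x]
      fun x' => 4 + 1 / 2 * (x' * y - 2 * x' - 2 * y - semicircle x' * semicircle y) := by
    filter_upwards [Ioo_mem_nhds h0 h4] with x' hx'
    rw [f, sqrt_mul_four_sub_mul_four_sub hx'.1.le hx'.2.le]
  refine HasDerivAt.congr_of_eventuallyEq ?_ heq
  refine ((((((hasDerivAt_id x).mul_const y).sub ((hasDerivAt_id x).const_mul 2)).sub_const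
    (2 * y)).sub ((hasDerivAt_semicircle h0 h4).mul_const (semicircle y))).const_mul
    (1 / 2 : ℝ) |>.const_add 4).congr_deriv ?_
  ring

lemma deriv_deriv_f_left {x : ℝ} (h0 : 0 < x) (h4 : x < 4) (y : ℝ) :
    deriv (fun x => deriv (fun x' => f x' y) x) x = 2 * semicircle y / semicircle x ^ 3 := by
  have heq : (fun x => deriv (fun x' => f x' y) x) =ᶠ[𝓝 x]
      fun x => 1 / 2 * (y - 2 - (2 - x) / semicircle x * semicircle y) := by
    filter_upwards [Ioo_mem_nhds h0 h4] with x' hx' using (hasDerivAt_f_left hx'.1 hx'.2 y).deriv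
  rw [heq.deriv_eq, ((((hasDerivAt_semicircle_slope h0 h4).mul_const (semicircle y)).const_sub
    (y - 2)).const_mul (1 / 2 : ℝ)).deriv]
  ring

lemma deriv_deriv_f_right {y : ℝ} (h0 : 0 < y) (h4 : y < 4) (x : ℝ) :
    deriv (fun y => deriv (fun y' => f x y') y) y = 2 * semicircle x / semicircle y ^ 3 := by
  simpa only [f_comm x] using deriv_deriv_f_left h0 h4 x

lemma deriv_deriv_f_mixed {x y : ℝ} (hx0 : 0 < x) (hx4 : x < 4) (hy0 : 0 < y) (hy4 : y < 4) :
    deriv (fun y => deriv (fun x' => f x' y) x) y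
      = 1 / 2 * (1 - (2 - x) / semicircle x * ((2 - y) / semicircle y)) := by
  have heq : (fun y => deriv (fun x' => f x' y) x)
      = fun y => 1 / 2 * (y - 2 - (2 - x) / semicircle x * semicircle y) :=
    funext fun y => (hasDerivAt_f_left hx0 hx4 y).deriv
  rw [heq]
  exact ((((hasDerivAt_id y).sub_const 2).sub
    ((hasDerivAt_semicircle hy0 hy4).const_mul _)).const_mul _).deriv

lemma deriv_deriv_f_mixed_swap {x y : ℝ} (hx0 : 0 < x) (hx4 : x < 4) (hy0 : 0 < y) (hy4 : y < 4) :
    deriv (fun x => deriv (fun y' => f x y') y) x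
      = 1 / 2 * (1 - (2 - y) / semicircle y * ((2 - x) / semicircle x)) := by
  have heq : (fun x => deriv (fun y' => f x y') y) = fun x => deriv (fun x' => f x' x) y :=
    funext fun x => by simp only [f_comm x]
  rw [heq, deriv_deriv_f_mixed hy0 hy4 hx0 hx4]

lemma hessian_det_eq {x y : ℝ} (hx0 : 0 < x) (hx4 : x < 4) (hy0 : 0 < y) (hy4 : y < 4) :
    2 * semicircle y / semicircle x ^ 3 * (2 * semicircle x / semicircle y ^ 3)
      - 1 / 2 * (1 - (2 - x) / semicircle x * ((2 - y) / semicircle y))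
        * (1 / 2 * (1 - (2 - y) / semicircle y * ((2 - x) / semicircle x)))
      = (16 - ((2 - x) * (2 - y) - semicircle x * semicircle y) ^ 2)
        / (4 * x * y * (4 - x) * (4 - y)) := by
  have hx := (semicircle_pos hx0 hx4).ne'
  have hy := (semicircle_pos hy0 hy4).ne'
  rw [show 4 * x * y * (4 - x) * (4 - y) = 4 * semicircle x ^ 2 * semicircle y ^ 2 by
    rw [semicircle_sq hx0.le hx4.le, semicircle_sq hy0.le hy4.le]; ring]
  field_simp
  ring

lemma half_sq_sqrt_sub_sqrt_sub_four {x y : ℝ} (hx0 : 0 ≤ x) (hx4 : x ≤ 4) (hy0 : 0 ≤ y)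
    (hy4 : y ≤ 4) :
    1 / 2 * (√((4 - x) * (4 - y)) - √(x * y)) ^ 2 - 4
      = (2 - x) * (2 - y) - semicircle x * semicircle y := by
  have hprod : √((4 - x) * (4 - y)) * √(x * y) = semicircle x * semicircle y := by
    rw [← sqrt_mul_four_sub_mul_four_sub hx0 hx4, ← Real.sqrt_mul (by nlinarith)]
    ring_nf
  linear_combination (Real.sq_sqrt (by nlinarith : 0 ≤ (4 - x) * (4 - y))) / 2
    + (Real.sq_sqrt (by positivity : 0 ≤ x * y)) / 2 - hprod

lemma sqrt_sub_sqrt_sq_mem_Ioo {x y : ℝ} (hx : 0 < x) (hy : 0 < y) (hxy : x + y < 4) :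
    (√((4 - x) * (4 - y)) - √(x * y)) ^ 2 ∈ Ioo 0 16 := by
  set S := √((4 - x) * (4 - y))
  set T := √(x * y)
  have hS2 : S ^ 2 = (4 - x) * (4 - y) := Real.sq_sqrt (by nlinarith)
  have hT2 : T ^ 2 = x * y := Real.sq_sqrt (by positivity)
  have hT : 0 < T := Real.sqrt_pos.2 (by positivity)
  have hTS : T < S := by nlinarith [Real.sqrt_nonneg ((4 - x) * (4 - y))]
  have hS4 : S < 4 := by nlinarith
  exact ⟨by nlinarith, by nlinarith⟩

lemma sixteen_sub_sq_pos {d : ℝ} (hd : d ∈ Ioo 0 16) : 0 < 16 - (1 / 2 * d - 4) ^ 2 := by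
  nlinarith [hd.1, hd.2]

theorem stmt_12 (a b : ℝ) (ha : 0 < a) (hb : 0 < b) (hab : a + b < 4) :
    deriv (fun x => deriv (fun x' => f x' b) x) a *
        deriv (fun y => deriv (fun y' => f a y') y) b -
      deriv (fun y => deriv (fun x => f x y) a) b *
        deriv (fun x => deriv (fun y => f x y) b) a
      = (16 - (1 / 2 * (Real.sqrt ((4 - a) * (4 - b)) - Real.sqrt (a * b)) ^ 2 - 4) ^ 2) /
          (4 * a * b * (4 - a) * (4 - b)) ∧
    0 < (16 - (1 / 2 * (Real.sqrt ((4 - a) * (4 - b)) - Real.sqrt (a * b)) ^ 2 - 4) ^ 2) /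
          (4 * a * b * (4 - a) * (4 - b)) := by
  have ha4 : a < 4 := by linarith
  have hb4 : b < 4 := by linarith
  refine ⟨?_, div_pos (sixteen_sub_sq_pos (sqrt_sub_sqrt_sq_mem_Ioo ha hb hab)) ?_⟩
  · rw [deriv_deriv_f_left ha ha4, deriv_deriv_f_right hb hb4, deriv_deriv_f_mixed ha ha4 hb hb4,
      deriv_deriv_f_mixed_swap ha ha4 hb hb4,
      half_sq_sqrt_sub_sqrt_sub_four ha.le ha4.le hb.le hb4.le]
    exact hessian_det_eq ha ha4 hb hb4
  · have := mul_pos (mul_pos ha hb) (mul_pos (sub_pos.2 ha4) (sub_pos.2 hb4))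
    linarith
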